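/- arXiv:2204.08772 — 2 statements merged into one kernel-verified Lean document; each statement's English description precedes it below -/
import Mathlib

section
/- Main abstract proposition: let ((A,→),obs) be a QARS and let e ⊆ → be a relation with the same normal elements as → (t is e-normal iff t is →-normal). Assume (i) e is asymptotically complete for →, i.e. for all t and q, t →⇓ q implies t e⇓ p for some p with q ≤ p; and (ii) for a given t ∈ A, Lim(t,e) contains exactly one element p. Then Lim(t,→) has a greatest element ⟦t⟧, ⟦t⟧ = p, and every e-sequence from t has limit ⟦t⟧. -/
/-- `t` is `r`-normal: there is no `s` with `r t s`. -/
def NormalElt {A : Type*} (r : A → A → Prop) (t : A) : Prop := ∀ s, ¬ r t s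

/-- An `r`-sequence from `t`: `f 0 = t` and at each step either an `r`-step is performed,
or the current element is `r`-normal and the sequence stays constant. -/
def RedSeq {A : Type*} (r : A → A → Prop) (t : A) (f : ℕ → A) : Prop :=
  f 0 = t ∧ ∀ n, r (f n) (f (n + 1)) ∨ (NormalElt r (f n) ∧ f (n + 1) = f n)

/-- `t r⇓ p` : some `r`-sequence from `t` has limit (supremum of observations) `p`. -/
def Converges {A S : Type*} [Preorder S] (obs : A → S) (r : A → A → Prop)
    (t : A) (p : S) : Prop :=
  ∃ f : ℕ → A, RedSeq r t f ∧ IsLUB (Set.range fun n => obs (f n)) p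

/-- **Main abstract proposition.**
Let `((A, red), obs)` be a QARS and `e ⊆ red` a relation with the same normal elements
as `red`. If (i) `e` is asymptotically complete for `red`, and (ii) for a given `t` the
set `Lim(t, e)` contains exactly one element `p`, then `Lim(t, red)` has a greatest
element `⟦t⟧`, `⟦t⟧ = p`, and every `e`-sequence from `t` has limit `⟦t⟧ = p`. -/
theorem main_abstract {A S : Type*}
    [OmegaCompletePartialOrder S] [OrderBot S]
    (red e : A → A → Prop) (obs : A → S)
    (hmono : ∀ ⦃t s⦄, red t s → obs t ≤ obs s)
    (hsub : ∀ ⦃t s⦄, e t s → red t s)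
    (hnf : ∀ t, NormalElt e t ↔ NormalElt red t)
    (hcomplete : ∀ t q, Converges obs red t q → ∃ p, q ≤ p ∧ Converges obs e t p)
    (t : A) (p : S) (huniq : {q | Converges obs e t q} = {p}) :
    IsGreatest {q | Converges obs red t q} p ∧
      ∀ f, RedSeq e t f → IsLUB (Set.range fun n => obs (f n)) p := by
  -- every e-sequence is a red-sequence
  have hseq : ∀ f, RedSeq e t f → RedSeq red t f := by
    rintro f ⟨h0, hstep⟩
    refine ⟨h0, fun n => ?_⟩
    rcases hstep n with h | ⟨hn, heq⟩
    · exact Or.inl (hsub h)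
    · exact Or.inr ⟨(hnf _).1 hn, heq⟩
  have hconv : ∀ q, Converges obs e t q → Converges obs red t q := by
    rintro q ⟨f, hf, hl⟩; exact ⟨f, hseq f hf, hl⟩
  have hp : Converges obs e t p := by
    have : p ∈ ({p} : Set S) := rfl
    rw [← huniq] at this; exact this
  -- every e-sequence from t has limit p
  have hlim : ∀ f, RedSeq e t f → IsLUB (Set.range fun n => obs (f n)) p := by
    intro f hf
    have hmonoC : Monotone fun n => obs (f n) := by
      refine monotone_nat_of_le_succ fun n => ?_
      rcases hf.2 n with h | ⟨_, heq⟩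
      · exact hmono (hsub h)
      · rw [heq]
    set c : OmegaCompletePartialOrder.Chain S := ⟨fun n => obs (f n), hmonoC⟩
    have hlub : IsLUB (Set.range fun n => obs (f n)) (OmegaCompletePartialOrder.ωSup c) := by
      constructor
      · rintro x ⟨n, rfl⟩
        exact OmegaCompletePartialOrder.le_ωSup c n
      · intro x hx
        exact OmegaCompletePartialOrder.ωSup_le c x fun n => hx ⟨n, rfl⟩
    have : OmegaCompletePartialOrder.ωSup c ∈ {q | Converges obs e t q} := ⟨f, hf, hlub⟩
    rw [huniq] at this
    rwa [this] at hlub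
  refine ⟨⟨hconv p hp, ?_⟩, hlim⟩
  intro q hq
  obtain ⟨p', hqp', hp'⟩ := hcomplete t q hq
  have : p' ∈ ({p} : Set S) := by rw [← huniq]; exact hp'
  rwa [this] at hqp'
end

section
/- obs-diamond implies obs-Random-Descent: let ((A,→),obs) be a QARS and e ⊆ → a relation such that (a) e satisfies the RD-diamond property (if t e t₁ and t e t₂ then t₁ = t₂ or there exists u with t₁ e u and t₂ e u), and (b) whenever t e t₁ and t e t₂, obs(t₁) = obs(t₂). Then e satisfies obs-Random-Descent: for every t ∈ A and any two e-sequences f and g from t, obs(f n) = obs(g n) for every n ∈ ℕ. -/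
/-- **obs-diamond implies obs-Random-Descent.**
Let `((A, red), obs)` be a QARS and `e ⊆ red` a relation satisfying
(a) the RD-diamond property, and (b) whenever `e t t₁` and `e t t₂`, `obs t₁ = obs t₂`.
Then `e` satisfies obs-Random-Descent: for every `t` and any two `e`-sequences
`f` and `g` from `t`, `obs (f n) = obs (g n)` for every `n`. -/
theorem obs_RD_of_obs_diamond {A S : Type*}
    [OmegaCompletePartialOrder S] [OrderBot S]
    (red e : A → A → Prop) (obs : A → S)
    (hmono : ∀ ⦃t s⦄, red t s → obs t ≤ obs s)
    (hsub : ∀ ⦃t s⦄, e t s → red t s)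
    (hdiamond : ∀ t t₁ t₂, e t t₁ → e t t₂ → t₁ = t₂ ∨ ∃ u, e t₁ u ∧ e t₂ u)
    (hobs : ∀ t t₁ t₂, e t t₁ → e t t₂ → obs t₁ = obs t₂)
    (t : A) (f g : ℕ → A) (hf : RedSeq e t f) (hg : RedSeq e t g) (n : ℕ) :
    obs (f n) = obs (g n) := by
  classical
  set e' : A → A → Prop := fun a b => e a b ∨ (NormalElt e a ∧ b = a) with he'
  have serial : ∀ a, ∃ b, e' a b := by
    intro a
    by_cases h : NormalElt e a
    · exact ⟨a, Or.inr ⟨h, rfl⟩⟩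
    · obtain ⟨s, hs⟩ := not_forall_not.mp h
      exact ⟨s, Or.inl hs⟩
  choose σ hσ using serial
  have D : ∀ a b c, e' a b → e' a c → ∃ d, e' b d ∧ e' c d := by
    intro a b c hab hac
    rcases hab with hab | ⟨hna, rfl⟩
    · rcases hac with hac | ⟨hna, rfl⟩
      · rcases hdiamond a b c hab hac with rfl | ⟨u, hu1, hu2⟩
        · exact ⟨σ b, hσ b, hσ b⟩
        · exact ⟨u, Or.inl hu1, Or.inl hu2⟩
      · exact absurd hab (hna b)
    · rcases hac with hac | ⟨_, rfl⟩
      · exact absurd hac (hna c)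
      · exact ⟨σ _, hσ _, hσ _⟩
  have obs' : ∀ a b c, e' a b → e' a c → obs b = obs c := by
    intro a b c hab hac
    rcases hab with hab | ⟨hna, rfl⟩
    · rcases hac with hac | ⟨hna, rfl⟩
      · exact hobs a b c hab hac
      · exact absurd hab (hna b)
    · rcases hac with hac | ⟨_, rfl⟩
      · exact absurd hac (hna c)
      · rfl
  -- stripping lemma
  have strip : ∀ (c : ℕ → A), (∀ i, e' (c i) (c (i + 1))) → ∀ x, e' (c 0) x →
      ∃ c' : ℕ → A, c' 0 = x ∧ (∀ i, e' (c' i) (c' (i + 1))) ∧ ∀ i, e' (c i) (c' i) := by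
    intro c hc x hx
    let F : ∀ i : ℕ, {y : A // e' (c i) y} :=
      fun i => Nat.rec ⟨x, hx⟩
        (fun i ih => ⟨(D (c i) (c (i + 1)) ih.1 (hc i) ih.2).choose,
          (D (c i) (c (i + 1)) ih.1 (hc i) ih.2).choose_spec.1⟩) i
    refine ⟨fun i => (F i).1, rfl, ?_, fun i => (F i).2⟩
    intro i
    exact (D (c i) (c (i + 1)) (F i).1 (hc i) (F i).2).choose_spec.2
  have iterchain : ∀ u : A, ∀ i, e' (σ^[i] u) (σ^[i + 1] u) := by
    intro u i
    rw [Function.iterate_succ_apply']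
    exact hσ _
  have hfstep : ∀ m, e' (f m) (f (m + 1)) := hf.2
  have hgstep : ∀ m, e' (g m) (g (m + 1)) := hg.2
  -- main invariant
  have main : ∀ m, ∃ c d : ℕ → A, c 0 = f m ∧ d 0 = g m ∧
      (∀ i, e' (c i) (c (i + 1))) ∧ (∀ i, e' (d i) (d (i + 1))) ∧
      (∀ i, obs (c i) = obs (d i)) ∧ ∃ k, c k = d k := by
    intro m
    induction m with
    | zero =>
        refine ⟨fun i => σ^[i] t, fun i => σ^[i] t, ?_, ?_, iterchain t, iterchain t,
          fun i => rfl, 0, rfl⟩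
        · simp [hf.1]
        · simp [hg.1]
    | succ m ih =>
        obtain ⟨c, d, hc0, hd0, hcc, hdc, hod, k, hk⟩ := ih
        obtain ⟨c', hc'0, hc'c, hcc'⟩ := strip c hcc (f (m + 1)) (hc0 ▸ hfstep m)
        obtain ⟨d', hd'0, hd'c, hdd'⟩ := strip d hdc (g (m + 1)) (hd0 ▸ hgstep m)
        obtain ⟨u, hu1, hu2⟩ := D (c k) (c' k) (d' k) (hcc' k) (hk ▸ hdd' k)
        refine ⟨fun i => if i ≤ k then c' i else σ^[i - (k + 1)] u,
                fun i => if i ≤ k then d' i else σ^[i - (k + 1)] u,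
                ?_, ?_, ?_, ?_, ?_, k + 1, ?_⟩
        · simp [hc'0]
        · simp [hd'0]
        · intro i
          rcases lt_trichotomy i k with h | rfl | h
          · simpa [h.le, Nat.succ_le_of_lt h] using hc'c i
          · simpa using hu1
          · have h1 : ¬ i ≤ k := not_le.mpr h
            have h2 : ¬ i + 1 ≤ k := by omega
            have h3 : i + 1 - (k + 1) = (i - (k + 1)) + 1 := by omega
            simpa [h1, h2, h3] using iterchain u (i - (k + 1))
        · intro i
          rcases lt_trichotomy i k with h | rfl | h
          · simpa [h.le, Nat.succ_le_of_lt h] using hd'c i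
          · simpa using hu2
          · have h1 : ¬ i ≤ k := not_le.mpr h
            have h2 : ¬ i + 1 ≤ k := by omega
            have h3 : i + 1 - (k + 1) = (i - (k + 1)) + 1 := by omega
            simpa [h1, h2, h3] using iterchain u (i - (k + 1))
        · intro i
          by_cases h : i ≤ k
          · simp only [h, if_pos]
            calc obs (c' i) = obs (c (i + 1)) := obs' (c i) _ _ (hcc' i) (hcc i)
              _ = obs (d (i + 1)) := hod (i + 1)
              _ = obs (d' i) := (obs' (d i) _ _ (hdd' i) (hdc i)).symm
          · simp [h]
        · simp
  obtain ⟨c, d, hc0, hd0, _, _, hod, _⟩ := main n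
  rw [← hc0, ← hd0]
  exact hod 0
end
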